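/- Let f = Xⁿ + a_{n−1}X^{n−1} + ⋯ + a₁X + a₀ ∈ ℍ[X] be monic with n ≥ 1. Then every r ∈ sn(f) satisfies all of: ‖r‖ < √(1 + ‖a_{n−1}‖² + ⋯ + ‖a₀‖²); ‖r‖ < 1 + max_{0 ≤ k ≤ n−1} ‖aₖ‖; and ‖r‖ ≤ max{1, ‖a_{n−1}‖ + ⋯ + ‖a₀‖}. -/

import Mathlib

open Polynomial

noncomputable section

/-- The real subalgebra `ℂ_I = ℝ·1 + ℝ·I` of `ℍ`, as an `ℝ`-submodule. -/
def CI (I : Quaternion ℝ) : Submodule ℝ (Quaternion ℝ) :=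
  Submodule.span ℝ {1, I}

/-- The orthogonal projection `π_I : ℍ → ℂ_I`, viewed as a map `ℍ → ℍ`. -/
def piI (I : Quaternion ℝ) (a : Quaternion ℝ) : Quaternion ℝ :=
  ((CI I).orthogonalProjection a : Quaternion ℝ)

/-- `f_I = ∑ₖ π_I(aₖ) Xᵏ`, the projection of the coefficients of `f` onto `ℂ_I`. -/
def polyProj (I : Quaternion ℝ) (f : Polynomial (Quaternion ℝ)) :
    Polynomial (Quaternion ℝ) :=
  f.sum fun k a => C (piI I a) * X ^ k

open scoped Classical in
/-- `K_{ℂ_I}(f_I)`: the convex hull of the roots of `f_I` in `ℂ_I` if `f_I` is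
nonconstant, and all of `ℂ_I` otherwise. -/
def KSet (I : Quaternion ℝ) (f : Polynomial (Quaternion ℝ)) : Set (Quaternion ℝ) :=
  if 0 < (polyProj I f).natDegree then
    convexHull ℝ {r : Quaternion ℝ | r ∈ CI I ∧ Polynomial.eval r (polyProj I f) = 0}
  else (CI I : Set (Quaternion ℝ))

/-- The Gauss–Lucas snail `sn(f) = ⋃_I K_{ℂ_I}(f_I)`, the union over all `I`
of trace `0` and norm `1`. -/
def snail (f : Polynomial (Quaternion ℝ)) : Set (Quaternion ℝ) :=
  ⋃ (I : Quaternion ℝ) (_ : I.re = 0 ∧ ‖I‖ = 1), KSet I f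

/-!
A point of `sn(f)` lies in the convex hull of the roots in `ℂ_I` of some `f_I`. Since `π_I` is
an orthogonal projection fixing `1`, `f_I` is again monic of degree `n`, with coefficients of
norm at most `‖aₖ‖`, so each such root `z` satisfies `‖z‖ⁿ ≤ ∑ₖ ‖aₖ‖ ‖z‖ᵏ`. The first two
bounds follow from this by `tⁿ ≤ M (1 + t + ⋯ + tⁿ⁻¹) ⇒ t < 1 + M` (after Cauchy–Schwarz and
`t ↦ t²` for the first), the third by bounding every `‖z‖ᵏ` by `‖z‖ⁿ⁻¹` when `‖z‖ > 1`. As the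
bounds describe balls, which are convex, they pass to the convex hulls.
-/

open Finset

theorem lt_one_add_of_pow_le_mul_geom_sum {M t : ℝ} {n : ℕ} (hM : 0 ≤ M)
    (h : t ^ n ≤ M * ∑ k ∈ range n, t ^ k) : t < 1 + M := by
  by_contra! ht
  have ht1 : 1 ≤ t := by linarith
  have htn : 1 ≤ t ^ n := one_le_pow₀ ht1
  have hgeom : t ^ n * (t - 1) ≤ M * (t ^ n - 1) :=
    calc t ^ n * (t - 1) ≤ M * (∑ k ∈ range n, t ^ k) * (t - 1) := by gcongr
      _ = M * (t ^ n - 1) := by rw [mul_assoc, geom_sum_mul]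
  have hM0 : M = 0 := by nlinarith
  subst hM0
  linarith

section CauchyBounds

variable {n : ℕ} {c : ℕ → ℝ} {t : ℝ}

theorem lt_sqrt_one_add_sum_sq_of_pow_le (ht : 0 ≤ t)
    (h : t ^ n ≤ ∑ k ∈ range n, c k * t ^ k) :
    t < √(1 + ∑ k ∈ range n, c k ^ 2) := by
  have hsq : (t ^ 2) ^ n ≤ (∑ k ∈ range n, c k ^ 2) * ∑ k ∈ range n, (t ^ 2) ^ k :=
    calc (t ^ 2) ^ n = (t ^ n) ^ 2 := by ring
      _ ≤ (∑ k ∈ range n, c k * t ^ k) ^ 2 := pow_le_pow_left₀ (by positivity) h 2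
      _ ≤ (∑ k ∈ range n, c k ^ 2) * ∑ k ∈ range n, (t ^ k) ^ 2 :=
        sum_mul_sq_le_sq_mul_sq _ _ _
      _ = (∑ k ∈ range n, c k ^ 2) * ∑ k ∈ range n, (t ^ 2) ^ k := by
        simp only [← pow_mul, mul_comm]
  rw [Real.lt_sqrt ht]
  exact lt_one_add_of_pow_le_mul_geom_sum (sum_nonneg fun k _ => sq_nonneg _) hsq

theorem lt_one_add_sup'_of_pow_le (hc : ∀ k, 0 ≤ c k) (ht : 0 ≤ t)
    (h : t ^ n ≤ ∑ k ∈ range n, c k * t ^ k) (hne : (range n).Nonempty) :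
    t < 1 + (range n).sup' hne c := by
  refine lt_one_add_of_pow_le_mul_geom_sum (n := n) ((hc 0).trans ?_) ?_
  · exact le_sup' c (mem_range.2 (nonempty_range_iff.1 hne).bot_lt)
  · rw [mul_sum]
    exact h.trans (sum_le_sum fun k hk => by gcongr; exact le_sup' c hk)

theorem le_max_one_sum_of_pow_le (hc : ∀ k, 0 ≤ c k)
    (h : t ^ n ≤ ∑ k ∈ range n, c k * t ^ k) :
    t ≤ max 1 (∑ k ∈ range n, c k) := by
  rcases le_or_gt t 1 with ht1 | ht1
  · exact le_max_of_le_left ht1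
  obtain _ | m := n
  · norm_num at h
  have hpow : t ^ (m + 1) ≤ (∑ k ∈ range (m + 1), c k) * t ^ m := by
    rw [sum_mul]
    exact h.trans (sum_le_sum fun k hk => by
      gcongr
      · exact hc k
      · exact ht1.le
      · exact Nat.lt_succ_iff.1 (mem_range.1 hk))
  rw [pow_succ'] at hpow
  exact le_max_of_le_right (le_of_mul_le_mul_right hpow (by positivity))

end CauchyBounds

theorem Polynomial.Monic.norm_pow_le_of_eval_eq_zero {R : Type*} [NormedDivisionRing R]
    {p : R[X]} (hp : p.Monic) {z : R} (hz : p.eval z = 0) :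
    ‖z‖ ^ p.natDegree ≤ ∑ k ∈ range p.natDegree, ‖p.coeff k‖ * ‖z‖ ^ k := by
  rw [eval_eq_sum_range, sum_range_succ, hp.coeff_natDegree, one_mul,
    add_eq_zero_iff_neg_eq'] at hz
  calc ‖z‖ ^ p.natDegree = ‖∑ k ∈ range p.natDegree, p.coeff k * z ^ k‖ := by
        rw [← norm_pow, ← hz, norm_neg]
    _ ≤ ∑ k ∈ range p.natDegree, ‖p.coeff k‖ * ‖z‖ ^ k :=
        norm_sum_le_of_le _ fun k _ => by rw [norm_mul, norm_pow]

theorem norm_piI_le (I a : Quaternion ℝ) : ‖piI I a‖ ≤ ‖a‖ :=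
  (CI I).norm_starProjection_apply_le a

theorem piI_one (I : Quaternion ℝ) : piI I 1 = 1 :=
  Submodule.starProjection_eq_self_iff.2 (Submodule.subset_span (Set.mem_insert _ _))

theorem coeff_polyProj (I : Quaternion ℝ) (f : (Quaternion ℝ)[X]) (m : ℕ) :
    (polyProj I f).coeff m = piI I (f.coeff m) := by
  simp only [polyProj, Polynomial.sum_def, finsetSum_coeff, coeff_C_mul_X_pow, sum_ite_eq]
  split_ifs with hm
  · rfl
  · simp [notMem_support_iff.1 hm, piI]

theorem natDegree_polyProj {I : Quaternion ℝ} {f : (Quaternion ℝ)[X]} (hf : f.Monic) :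
    (polyProj I f).natDegree = f.natDegree := by
  refine le_antisymm (natDegree_le_iff_coeff_eq_zero.2 fun m hm => ?_) (le_natDegree_of_ne_zero ?_)
  · simp [coeff_polyProj, coeff_eq_zero_of_natDegree_lt hm, piI]
  · simp [coeff_polyProj, hf.coeff_natDegree, piI_one]

theorem monic_polyProj {I : Quaternion ℝ} {f : (Quaternion ℝ)[X]} (hf : f.Monic) :
    (polyProj I f).Monic := by
  rw [Monic, leadingCoeff, natDegree_polyProj hf, coeff_polyProj, hf.coeff_natDegree, piI_one]

theorem norm_pow_le_of_eval_polyProj_eq_zero {I : Quaternion ℝ} {f : (Quaternion ℝ)[X]}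
    (hf : f.Monic) {z : Quaternion ℝ} (hz : (polyProj I f).eval z = 0) :
    ‖z‖ ^ f.natDegree ≤ ∑ k ∈ range f.natDegree, ‖f.coeff k‖ * ‖z‖ ^ k := by
  have h := (monic_polyProj hf).norm_pow_le_of_eval_eq_zero hz
  rw [natDegree_polyProj hf] at h
  exact h.trans (sum_le_sum fun k _ => by gcongr; rw [coeff_polyProj]; exact norm_piI_le I _)

theorem snail_subset_of_convex {f : (Quaternion ℝ)[X]} (hf : f.Monic) (hn : 1 ≤ f.natDegree)
    {S : Set (Quaternion ℝ)} (hS : Convex ℝ S)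
    (hroots : {z | ‖z‖ ^ f.natDegree ≤ ∑ k ∈ range f.natDegree, ‖f.coeff k‖ * ‖z‖ ^ k} ⊆ S) :
    snail f ⊆ S := by
  intro r hr
  obtain ⟨I, -, hK⟩ : ∃ I : Quaternion ℝ, (I.re = 0 ∧ ‖I‖ = 1) ∧ r ∈ KSet I f := by
    simpa [snail] using hr
  rw [KSet, if_pos (by rwa [natDegree_polyProj hf])] at hK
  exact convexHull_min (fun z hz => hroots (norm_pow_le_of_eval_polyProj_eq_zero hf hz.2)) hS hK

theorem snail_bounds
    (f : Polynomial (Quaternion ℝ)) (hmonic : f.Monic) (hn : 1 ≤ f.natDegree)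
    (r : Quaternion ℝ) (hr : r ∈ snail f) :
    ‖r‖ < Real.sqrt (1 + ∑ k ∈ Finset.range f.natDegree, ‖f.coeff k‖ ^ 2) ∧
    ‖r‖ < 1 + (Finset.range f.natDegree).sup'
        (Finset.nonempty_range_iff.mpr (by omega)) (fun k => ‖f.coeff k‖) ∧
    ‖r‖ ≤ max 1 (∑ k ∈ Finset.range f.natDegree, ‖f.coeff k‖) := by
  have hc : ∀ k, 0 ≤ ‖f.coeff k‖ := fun k => norm_nonneg _
  refine ⟨?_, ?_, ?_⟩
  · refine mem_ball_zero_iff.1 (snail_subset_of_convex hmonic hn (convex_ball 0 _) ?_ hr)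
    exact fun z hz => mem_ball_zero_iff.2 (lt_sqrt_one_add_sum_sq_of_pow_le (norm_nonneg z) hz)
  · refine mem_ball_zero_iff.1 (snail_subset_of_convex hmonic hn (convex_ball 0 _) ?_ hr)
    exact fun z hz => mem_ball_zero_iff.2 (lt_one_add_sup'_of_pow_le hc (norm_nonneg z) hz _)
  · refine mem_closedBall_zero_iff.1
      (snail_subset_of_convex hmonic hn (convex_closedBall 0 _) ?_ hr)
    exact fun z hz => mem_closedBall_zero_iff.2 (le_max_one_sum_of_pow_le hc hz)
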